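/- arXiv:2512.04912 — 5 statements merged into one kernel-verified Lean document; each statement's English description precedes it below -/
import Mathlib

section
/- For any subset K of a Banach space X and any ε > 0, if c_n(K) ≤ ε then N_co(ε', K) ≤ n + 1 for every ε' > ε. Equivalently (Theorem 1, part 1): if n < N_co(ε, K) − 1 then c_n(K) > ε. -/
open Metric Set Filter
open scoped ENNReal

variable {X : Type*} [NormedAddCommGroup X] [NormedSpace ℝ X]

/-- `co_n(S)`: convex-type combinations of `n` elements of `S` with ℓ¹ norm of
coefficients at most 1. -/
def convComb (n : ℕ) (S : Set X) : Set X :=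
  {x | ∃ (l : Fin n → ℝ) (s : Fin n → X),
    (∑ i, |l i|) ≤ 1 ∧ (∀ i, s i ∈ S) ∧ x = ∑ i, l i • s i}

/-- `c̄o(S)`: elements approximable by `co_n(S)` as `n → ∞`. -/
def cobar (S : Set X) : Set X :=
  {f | Tendsto (fun n => infDist f (convComb n S)) atTop (nhds 0)}

/-- The convex `n`-width of `K`. -/
noncomputable def cwidth (n : ℕ) (K : Set X) : ℝ≥0∞ :=
  ⨅ φ : Fin n → X, ⨆ f ∈ K, EMetric.infEdist f (convComb n (Set.range φ))

/-- Minimal `ε`-covering number of `S` by points of `X` (∞ if none exists). -/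
noncomputable def coverN (ε : ℝ) (S : Set X) : ℕ∞ :=
  ⨅ (T : Finset X) (_ : ∀ s ∈ S, ∃ t ∈ T, dist s t ≤ ε), (T.card : ℕ∞)

/-- `N_co(ε, K)`: minimal covering number of a set whose `c̄o` contains `K`. -/
noncomputable def Ncov (ε : ℝ) (K : Set X) : ℕ∞ :=
  ⨅ (S : Set X) (_ : K ⊆ cobar S), coverN ε S

lemma mul_sign_eq_abs (a : ℝ) : a * Real.sign a = |a| := by
  rcases lt_trichotomy a 0 with h | h | h
  · rw [Real.sign_of_neg h, abs_of_neg h]; ring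
  · simp [h]
  · rw [Real.sign_of_pos h, abs_of_pos h]; ring

lemma abs_sign_le_one (a : ℝ) : |Real.sign a| ≤ 1 := by
  rcases lt_trichotomy a 0 with h | h | h
  · simp [Real.sign_of_neg h]
  · simp [h]
  · simp [Real.sign_of_pos h]

lemma convComb_mono {S : Set X} (h0 : (0 : X) ∈ S) {k m : ℕ} (hkm : k ≤ m) :
    convComb k S ⊆ convComb m S := by
  rintro x ⟨l, s, hl, hs, rfl⟩
  refine ⟨fun i => if h : (i : ℕ) < k then l ⟨i, h⟩ else 0,
    fun i => if h : (i : ℕ) < k then s ⟨i, h⟩ else 0, ?_, ?_, ?_⟩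
  · have : (∑ i : Fin m, |if h : (i : ℕ) < k then l ⟨i, h⟩ else 0|)
        = ∑ i : Fin k, |l i| := by
      rw [Fin.sum_univ_eq_sum_range (fun j => |if h : j < k then l ⟨j, h⟩ else 0|) m,
        ← Finset.sum_subset (Finset.range_subset_range.mpr hkm)
          (by intro j _ hj; simp at hj; simp [hj]),
        ← Fin.sum_univ_eq_sum_range (fun j => |if h : j < k then l ⟨j, h⟩ else 0|) k]
      exact Finset.sum_congr rfl fun i _ => by simp [i.isLt]
    rw [this]; exact hl
  · intro i
    by_cases h : (i : ℕ) < k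
    · simp only [dif_pos h]; exact hs _
    · simp only [dif_neg h]; exact h0
  · rw [Fin.sum_univ_eq_sum_range
      (fun j => (if h : j < k then l ⟨j, h⟩ else 0) • (if h : j < k then s ⟨j, h⟩ else 0)) m,
      ← Finset.sum_subset (Finset.range_subset_range.mpr hkm)
        (by intro j _ hj; simp at hj; simp [hj]),
      ← Fin.sum_univ_eq_sum_range
        (fun j => (if h : j < k then l ⟨j, h⟩ else 0) • (if h : j < k then s ⟨j, h⟩ else 0)) k]
    apply Finset.sum_congr rfl
    intro i _
    simp [i.isLt]

theorem stmt1 [CompleteSpace X] (K : Set X) (n : ℕ) (ε : ℝ) (hε : 0 < ε)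
    (h : cwidth n K ≤ ENNReal.ofReal ε) :
    ∀ ε' : ℝ, ε < ε' → Ncov ε' K ≤ (n + 1 : ℕ∞) := by
  intro ε' hε'
  classical
  have hε'0 : 0 < ε' := hε.trans hε'
  have h2 : cwidth n K < ENNReal.ofReal ε' :=
    lt_of_le_of_lt h ((ENNReal.ofReal_lt_ofReal_iff hε'0).mpr hε')
  obtain ⟨φ, hφ⟩ := iInf_lt_iff.mp h2
  -- the covering set
  set S : Set X := ⋃ x ∈ insert (0 : X) (Set.range φ), closedBall x ε' with hS
  have h0S : (0 : X) ∈ S := by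
    apply mem_biUnion (mem_insert _ _)
    exact mem_closedBall_self hε'0.le
  -- every element of K is (exactly) in convComb (n+1) S
  have hmem : ∀ f ∈ K, f ∈ convComb (n + 1) S := by
    intro f hf
    have hlt : EMetric.infEdist f (convComb n (Set.range φ)) < ENNReal.ofReal ε' :=
      lt_of_le_of_lt (le_iSup₂ (f := fun f (_ : f ∈ K) =>
        EMetric.infEdist f (convComb n (Set.range φ))) f hf) hφ
    obtain ⟨y, hy, hdy⟩ := EMetric.infEdist_lt_iff.mp hlt
    have hdy' : dist f y < ε' := edist_lt_ofReal.mp hdy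
    obtain ⟨l, s, hl, hs, rfl⟩ := hy
    set r : X := f - ∑ i, l i • s i with hr
    have hrn : ‖r‖ ≤ ε' := by
      have : dist f (∑ i, l i • s i) = ‖r‖ := by rw [dist_eq_norm]
      linarith [this ▸ hdy']
    set c : ℝ := ∑ i, |l i| with hc
    refine ⟨Fin.snoc l (1 - c), Fin.snoc (fun i => s i + Real.sign (l i) • r) r, ?_, ?_, ?_⟩
    · rw [Fin.sum_univ_castSucc]
      simp only [Fin.snoc_castSucc, Fin.snoc_last]
      have hc0 : 0 ≤ c := Finset.sum_nonneg fun i _ => abs_nonneg _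
      rw [abs_of_nonneg (by linarith : (0:ℝ) ≤ 1 - c), ← hc]
      linarith
    · intro i
      induction i using Fin.lastCases with
      | last =>
        simp only [Fin.snoc_last]
        exact mem_biUnion (mem_insert _ _) (by simpa [mem_closedBall, dist_eq_norm] using hrn)
      | cast i =>
        simp only [Fin.snoc_castSucc]
        refine mem_biUnion (mem_insert_of_mem _ (hs i)) ?_
        rw [mem_closedBall, dist_eq_norm]
        simp only [add_sub_cancel_left, norm_smul, Real.norm_eq_abs]
        calc |Real.sign (l i)| * ‖r‖ ≤ 1 * ‖r‖ :=
              mul_le_mul_of_nonneg_right (abs_sign_le_one _) (norm_nonneg _)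
          _ ≤ ε' := by rw [one_mul]; exact hrn
    · rw [Fin.sum_univ_castSucc]
      simp only [Fin.snoc_castSucc, Fin.snoc_last]
      have : ∑ i : Fin n, l i • (s i + Real.sign (l i) • r)
          = (∑ i, l i • s i) + c • r := by
        rw [hc, Finset.sum_smul]
        rw [← Finset.sum_add_distrib]
        apply Finset.sum_congr rfl
        intro i _
        rw [smul_add, smul_smul, mul_sign_eq_abs]
      rw [this]
      rw [hr]
      module
  -- hence K ⊆ cobar S
  have hKS : K ⊆ cobar S := by
    intro f hf
    have : ∀ m ≥ n + 1, infDist f (convComb m S) = 0 := fun m hm =>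
      infDist_zero_of_mem (convComb_mono h0S hm (hmem f hf))
    refine Tendsto.congr' ?_ (tendsto_const_nhds (x := (0:ℝ)))
    filter_upwards [eventually_ge_atTop (n + 1)] with m hm
    exact (this m hm).symm
  -- covering number bound
  have hcov : coverN ε' S ≤ (n + 1 : ℕ∞) := by
    set T : Finset X := insert 0 (Finset.image φ Finset.univ) with hT
    have hTcov : ∀ s ∈ S, ∃ t ∈ T, dist s t ≤ ε' := by
      intro x hx
      obtain ⟨y, hy, hxy⟩ := mem_iUnion₂.mp hx
      refine ⟨y, ?_, hxy⟩
      rcases hy with rfl | ⟨i, rfl⟩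
      · exact Finset.mem_insert_self _ _
      · exact Finset.mem_insert_of_mem (Finset.mem_image_of_mem φ (Finset.mem_univ i))
    calc coverN ε' S ≤ (T.card : ℕ∞) := iInf₂_le (f := fun T (_ : ∀ s ∈ S, ∃ t ∈ T, dist s t ≤ ε') => (T.card : ℕ∞)) T hTcov
      _ ≤ (n + 1 : ℕ∞) := by
          have h1 : (Finset.image φ Finset.univ).card ≤ n :=
            le_trans Finset.card_image_le (by simp)
          have : T.card ≤ n + 1 := le_trans (Finset.card_insert_le _ _) (by omega)
          exact_mod_cast this
  exact le_trans (iInf₂_le (f := fun S (_ : K ⊆ cobar S) => coverN ε' S) S hKS) hcov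
end

section
/- Key construction in the proof of Theorem 1, part 1: Let φ_1,…,φ_n ∈ X, f ∈ X, and λ_1,…,λ_n with ∑|λ_i| ≤ 1 satisfy ‖f − ∑ λ_i φ_i‖ ≤ α. Set φ_0 = 0, λ_0 = 1 − ∑_{j=1}^n |λ_j|, and φ'_i = φ_i + sign(λ_i)(f − ∑_j λ_j φ_j) for i = 0,…,n. Then ∑_{i=0}^n |λ_i| = 1, ‖φ_i − φ'_i‖ ≤ α for each i, and f = ∑_{i=0}^n λ_i φ'_i exactly, so f ∈ co_{n+1}(⋃_{i=0}^n B_α(φ_i)). -/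
open Metric Set Filter
open scoped ENNReal

variable {X : Type*} [NormedAddCommGroup X] [NormedSpace ℝ X]

lemma sign_mul_self_eq_abs (x : ℝ) : Real.sign x * x = |x| := by
  rcases lt_trichotomy x 0 with h | h | h
  · rw [Real.sign_of_neg h, abs_of_neg h]; ring
  · simp [h]
  · rw [Real.sign_of_pos h, abs_of_pos h]; ring

lemma abs_sign_le (x : ℝ) : |Real.sign x| ≤ 1 := by
  rcases Real.sign_apply_eq x with h | h | h <;> simp [h]

theorem stmt3 (n : ℕ) (φ : Fin n → X) (lam : Fin n → ℝ) (f : X) (α : ℝ)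
    (hsum : ∑ i, |lam i| ≤ 1)
    (happrox : ‖f - ∑ i, lam i • φ i‖ ≤ α)
    (Φ : Fin (n + 1) → X) (Λ : Fin (n + 1) → ℝ) (Φ' : Fin (n + 1) → X)
    (hΦ : Φ = Fin.cons 0 φ)
    (hΛ : Λ = Fin.cons (1 - ∑ i, |lam i|) lam)
    (hΦ' : ∀ i, Φ' i = Φ i + Real.sign (Λ i) • (f - ∑ j, lam j • φ j)) :
    (∑ i, |Λ i|) = 1 ∧ (∀ i, ‖Φ i - Φ' i‖ ≤ α) ∧ f = ∑ i, Λ i • Φ' i ∧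
      f ∈ convComb (n + 1) (⋃ i, Metric.closedBall (Φ i) α) := by
  set r := f - ∑ j, lam j • φ j with hr
  have h1 : (∑ i, |Λ i|) = 1 := by
    subst hΛ
    rw [Fin.sum_univ_succ]
    simp only [Fin.cons_zero, Fin.cons_succ]
    rw [abs_of_nonneg (by linarith)]
    ring
  have h2 : ∀ i, ‖Φ i - Φ' i‖ ≤ α := by
    intro i
    rw [hΦ' i]
    have : Φ i - (Φ i + Real.sign (Λ i) • r) = -(Real.sign (Λ i) • r) := by abel
    rw [this, norm_neg, norm_smul, Real.norm_eq_abs]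
    calc |Real.sign (Λ i)| * ‖r‖ ≤ 1 * ‖r‖ :=
          mul_le_mul_of_nonneg_right (abs_sign_le _) (norm_nonneg _)
      _ = ‖r‖ := one_mul _
      _ ≤ α := happrox
  have h3 : f = ∑ i, Λ i • Φ' i := by
    have : ∑ i, Λ i • Φ' i = (∑ i, Λ i • Φ i) + (∑ i, Real.sign (Λ i) * Λ i) • r := by
      rw [Finset.sum_smul]
      rw [← Finset.sum_add_distrib]
      congr 1
      ext i
      rw [hΦ' i, smul_add, smul_smul, mul_comm]
    rw [this]
    have e1 : (∑ i, Λ i • Φ i) = ∑ i, lam i • φ i := by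
      subst hΛ hΦ
      rw [Fin.sum_univ_succ]
      simp
    have e2 : (∑ i, Real.sign (Λ i) * Λ i) = 1 := by
      rw [← h1]; exact Finset.sum_congr rfl fun i _ => sign_mul_self_eq_abs (Λ i)
    rw [e1, e2, one_smul, hr]; abel
  refine ⟨h1, h2, h3, ⟨Λ, Φ', h1.le, fun i => ?_, h3⟩⟩
  exact Set.mem_iUnion.2 ⟨i, by
    rw [Metric.mem_closedBall, dist_comm, dist_eq_norm]; exact h2 i⟩
end

section
/- Stronger form of Theorem 1, part 1: if c_n(K) ≤ ε, then for every α > ε there is a set S ⊆ X with N(α, S) ≤ n + 1 and K ⊆ co_{n+1}(S) ⊆ c̄o(S); consequently N_co(α, K) ≤ n + 1. -/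
open Metric Set Filter
open scoped ENNReal

variable {X : Type*} [NormedAddCommGroup X] [NormedSpace ℝ X]

lemma convComb_mono_of_zero {X : Type*} [NormedAddCommGroup X] [NormedSpace ℝ X]
    {S : Set X} (h0 : (0:X) ∈ S) {m k : ℕ} (hmk : m ≤ k) :
    convComb m S ⊆ convComb k S := by
  classical
  rintro x ⟨l, s, hl, hs, rfl⟩
  refine ⟨fun i => if h : (i : ℕ) < m then l ⟨i, h⟩ else 0,
    fun i => if h : (i : ℕ) < m then s ⟨i, h⟩ else 0, ?_, ?_, ?_⟩
  · have key : ∑ i : Fin k, |if h : (i : ℕ) < m then l ⟨i, h⟩ else 0|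
        = ∑ i : Fin m, |l i| := by
      rw [Fin.sum_univ_eq_sum_range (fun j => |if h : j < m then l ⟨j, h⟩ else 0|) k,
        ← Finset.sum_subset (Finset.range_subset_range.mpr hmk) (fun j _ hj => by
          simp only [Finset.mem_range, not_lt] at hj
          rw [dif_neg (by omega), abs_zero]),
        ← Fin.sum_univ_eq_sum_range (fun j => |if h : j < m then l ⟨j, h⟩ else 0|) m]
      apply Finset.sum_congr rfl
      intro i _
      rw [dif_pos i.isLt]
    rw [key]; exact hl
  · intro i
    dsimp only
    by_cases h : (i : ℕ) < m
    · rw [dif_pos h]; exact hs _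
    · rw [dif_neg h]; exact h0
  · have key : ∀ i : Fin k,
        (if h : (i : ℕ) < m then l ⟨i, h⟩ else 0) • (if h : (i : ℕ) < m then s ⟨i, h⟩ else 0)
        = if h : (i : ℕ) < m then l ⟨i, h⟩ • s ⟨i, h⟩ else 0 := by
      intro i
      by_cases h : (i : ℕ) < m
      · rw [dif_pos h, dif_pos h, dif_pos h]
      · rw [dif_neg h, dif_neg h, dif_neg h, zero_smul]
    rw [Finset.sum_congr rfl fun i _ => key i,
      Fin.sum_univ_eq_sum_range (fun j => if h : j < m then l ⟨j, h⟩ • s ⟨j, h⟩ else 0) k,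
      ← Finset.sum_subset (Finset.range_subset_range.mpr hmk) (fun j _ hj => by
        simp only [Finset.mem_range, not_lt] at hj
        rw [dif_neg (by omega)]),
      ← Fin.sum_univ_eq_sum_range (fun j => if h : j < m then l ⟨j, h⟩ • s ⟨j, h⟩ else 0) m]
    apply Finset.sum_congr rfl
    intro i _
    rw [dif_pos i.isLt]

theorem stmt4 [CompleteSpace X] (K : Set X) (n : ℕ) (ε : ℝ) (hε : 0 < ε)
    (h : cwidth n K ≤ ENNReal.ofReal ε) :
    ∀ α : ℝ, ε < α → ∃ S : Set X, coverN α S ≤ (n + 1 : ℕ∞) ∧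
      K ⊆ convComb (n + 1) S ∧ convComb (n + 1) S ⊆ cobar S ∧
      Ncov α K ≤ (n + 1 : ℕ∞) := by
  intro α hα
  classical
  have hα0 : 0 < α := hε.trans hα
  set α' := (ε + α) / 2 with hα'def
  have hεα' : ε < α' := by rw [hα'def]; linarith
  have hα'α : α' < α := by rw [hα'def]; linarith
  have hα'0 : 0 < α' := hε.trans hεα'
  have h1 : cwidth n K < ENNReal.ofReal α' :=
    lt_of_le_of_lt h ((ENNReal.ofReal_lt_ofReal_iff hα'0).mpr hεα')
  rw [cwidth, iInf_lt_iff] at h1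
  obtain ⟨φ, hφ⟩ := h1
  set θ := 1 - α' / α with hθdef
  have hfrac : α' / α < 1 := (div_lt_one hα0).mpr hα'α
  have hθ0 : 0 < θ := by rw [hθdef]; linarith
  set S : Set X := (fun y : X => θ⁻¹ • y) '' Set.range φ ∪ closedBall 0 α with hSdef
  have h0S : (0 : X) ∈ S := Or.inr (by simpa using hα0.le)
  have hKsub : K ⊆ convComb (n + 1) S := by
    intro f hf
    have hsup : EMetric.infEdist f (convComb n (Set.range φ)) < ENNReal.ofReal α' :=
      lt_of_le_of_lt (le_iSup₂ (f := fun g (_ : g ∈ K) =>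
        EMetric.infEdist g (convComb n (Set.range φ))) f hf) hφ
    obtain ⟨x, hxC, hex⟩ := EMetric.infEdist_lt_iff.mp hsup
    have hdx : ‖f - x‖ < α' := by
      have := edist_lt_ofReal.mp hex
      rwa [dist_eq_norm] at this
    obtain ⟨l, s, hl, hs, hx⟩ := hxC
    set r := f - x with hrdef
    set c := ‖r‖ / α with hcdef
    set b : X := if r = 0 then 0 else (α / ‖r‖) • r with hbdef
    have hcb : c • b = r := by
      by_cases hr : r = 0
      · simp [hbdef, hcdef, hr]
      · rw [hbdef, if_neg hr, hcdef, smul_smul]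
        have hne : ‖r‖ ≠ 0 := norm_ne_zero_iff.mpr hr
        have : ‖r‖ / α * (α / ‖r‖) = 1 := by field_simp
        rw [this, one_smul]
    have hbS : b ∈ S := by
      refine Or.inr ?_
      by_cases hr : r = 0
      · simp [hbdef, hr, hα0.le]
      · rw [mem_closedBall, dist_zero_right, hbdef, if_neg hr, norm_smul]
        have hrn : (0:ℝ) < ‖r‖ := norm_pos_iff.mpr hr
        rw [Real.norm_eq_abs, abs_of_pos (div_pos hα0 hrn)]
        rw [div_mul_cancel₀ _ hrn.ne']
    have hc : c ≤ α' / α := by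
      rw [hcdef]
      gcongr
    have hc0 : 0 ≤ c := div_nonneg (norm_nonneg _) hα0.le
    refine ⟨Fin.snoc (fun i => θ * l i) c, Fin.snoc (fun i => θ⁻¹ • s i) b, ?_, ?_, ?_⟩
    · rw [Fin.sum_univ_castSucc]
      simp only [Fin.snoc_castSucc, Fin.snoc_last]
      have h2 : ∑ i : Fin n, |θ * l i| = θ * ∑ i, |l i| := by
        rw [Finset.mul_sum]
        exact Finset.sum_congr rfl fun i _ => by rw [abs_mul, abs_of_pos hθ0]
      rw [h2, abs_of_nonneg hc0]
      calc θ * ∑ i, |l i| + c ≤ θ * 1 + α' / α :=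
            add_le_add (mul_le_mul_of_nonneg_left hl hθ0.le) hc
        _ = 1 := by rw [hθdef]; ring
    · intro i
      refine Fin.lastCases ?_ ?_ i
      · rw [Fin.snoc_last]; exact hbS
      · intro j
        rw [Fin.snoc_castSucc]
        exact Or.inl ⟨s j, hs j, rfl⟩
    · rw [Fin.sum_univ_castSucc]
      simp only [Fin.snoc_castSucc, Fin.snoc_last]
      have hterm : ∀ i : Fin n, (θ * l i) • (θ⁻¹ • s i) = l i • s i := by
        intro i
        rw [smul_smul]
        congr 1
        field_simp
      rw [Finset.sum_congr rfl fun i _ => hterm i, hcb, ← hx, hrdef]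
      abel
  have hcob : convComb (n + 1) S ⊆ cobar S := by
    intro g hg
    rw [cobar, mem_setOf_eq]
    have hev : ∀ᶠ k in atTop, (0:ℝ) = infDist g (convComb k S) := by
      filter_upwards [eventually_ge_atTop (n+1)] with k hk
      exact (infDist_zero_of_mem (convComb_mono_of_zero h0S hk hg)).symm
    exact Tendsto.congr' hev tendsto_const_nhds
  have hcov : coverN α S ≤ (n + 1 : ℕ∞) := by
    classical
    set T : Finset X := Finset.image (fun i => θ⁻¹ • φ i) Finset.univ ∪ {0} with hTdef
    have hTcond : ∀ s ∈ S, ∃ t ∈ T, dist s t ≤ α := by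
      rintro s (⟨y, ⟨i, rfl⟩, rfl⟩ | hsb)
      · exact ⟨θ⁻¹ • φ i, Finset.mem_union_left _
          (Finset.mem_image_of_mem _ (Finset.mem_univ i)), by simp [hα0.le]⟩
      · exact ⟨0, Finset.mem_union_right _ (Finset.mem_singleton_self 0),
          mem_closedBall.mp hsb⟩
    have hcard : T.card ≤ n + 1 := by
      calc T.card ≤ (Finset.image (fun i => θ⁻¹ • φ i)
            (Finset.univ : Finset (Fin n))).card + ({0} : Finset X).card :=
            Finset.card_union_le _ _
        _ ≤ n + 1 := by
            have := Finset.card_image_le (s := (Finset.univ : Finset (Fin n)))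
              (f := fun i => θ⁻¹ • φ i)
            simp only [Finset.card_univ, Fintype.card_fin] at this
            simp [this]
    calc coverN α S ≤ (T.card : ℕ∞) := by
          rw [coverN]; exact iInf₂_le T hTcond
      _ ≤ (n + 1 : ℕ∞) := by exact_mod_cast hcard
  refine ⟨S, hcov, hKsub, hcob, ?_⟩
  calc Ncov α K ≤ coverN α S := by
        rw [Ncov]
        exact iInf₂_le S (fun y hy => hcob (hKsub hy))
    _ ≤ (n + 1 : ℕ∞) := hcov
end

section
/- Lemma 1 (boundedness of optimal coefficients implies width equality): For K ⊆ X, if c_n(K) < ∞ then c_n(K) = d_n(K). -/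
open Metric Set Filter
open scoped ENNReal

variable {X : Type*} [NormedAddCommGroup X] [NormedSpace ℝ X]

/-- The Kolmogorov `n`-width of `K`. -/
noncomputable def kwidth (n : ℕ) (K : Set X) : ℝ≥0∞ :=
  ⨅ φ : Fin n → X, ⨆ f ∈ K,
    EMetric.infEdist f ((Submodule.span ℝ (Set.range φ) : Submodule ℝ X) : Set X)

/-! Every element of `convComb n (range φ)` lies in the span of `φ`, so `kwidth ≤ cwidth`.
Conversely, `cwidth n K < ⊤` forces `K` to be bounded. Then for any `φ` the near-best
approximations of `K` from `span (range φ)` form a bounded subset of a finite-dimensional space;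
by the open mapping theorem they have uniformly bounded coefficients, say of ℓ¹ norm at most `M`,
and so they all lie in `convComb n (range (M • φ))`. -/

theorem convComb_subset_span (n : ℕ) (S : Set X) :
    convComb n S ⊆ (Submodule.span ℝ S : Set X) := by
  rintro x ⟨l, s, -, hs, rfl⟩
  exact Submodule.sum_mem _ fun i _ => Submodule.smul_mem _ _ (Submodule.subset_span (hs i))

theorem kwidth_le_cwidth (n : ℕ) (K : Set X) : kwidth n K ≤ cwidth n K :=
  iInf_mono fun _ => iSup₂_mono fun _ _ => infEDist_anti (convComb_subset_span n _)

theorem Bornology.IsBounded.convComb {S : Set X} (hS : Bornology.IsBounded S) (n : ℕ) :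
    Bornology.IsBounded (convComb n S) := by
  obtain ⟨R, hR, hSR⟩ := hS.exists_pos_norm_le
  refine isBounded_iff_forall_norm_le.2 ⟨R, ?_⟩
  rintro x ⟨l, s, hl, hs, rfl⟩
  calc ‖∑ i, l i • s i‖ ≤ ∑ i, |l i| * R := by
        refine (norm_sum_le _ _).trans (Finset.sum_le_sum fun i _ => ?_)
        rw [norm_smul, Real.norm_eq_abs]
        exact mul_le_mul_of_nonneg_left (hSR _ (hs i)) (abs_nonneg _)
    _ = (∑ i, |l i|) * R := (Finset.sum_mul ..).symm
    _ ≤ R := mul_le_of_le_one_left hR.le hl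

theorem isBounded_of_cwidth_lt_top {n : ℕ} {K : Set X} (h : cwidth n K < ⊤) :
    Bornology.IsBounded K := by
  obtain ⟨φ, hφ⟩ := iInf_lt_iff.mp h
  set r := ⨆ f ∈ K, infEDist f (convComb n (Set.range φ))
  refine ((Set.finite_range φ).isBounded.convComb n).cthickening (δ := r.toReal).subset
    fun f hf => ?_
  rw [mem_cthickening_iff, ENNReal.ofReal_toReal (a := r) hφ.ne]
  exact le_iSup₂ (f := fun f _ => infEDist f (convComb n (Set.range φ))) f hf

theorem exists_coeff_norm_le {ι : Type*} [Fintype ι] (φ : ι → X) :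
    ∃ C > 0, ∀ g ∈ Submodule.span ℝ (Set.range φ),
      ∃ μ : ι → ℝ, ∑ i, μ i • φ i = g ∧ ‖μ‖ ≤ C * ‖g‖ := by
  let T := Fintype.linearCombination ℝ φ
  let T' := (T.rangeRestrict).toContinuousLinearMap
  have : CompleteSpace (LinearMap.range T) := FiniteDimensional.complete ℝ _
  obtain ⟨C, hC0, hC⟩ := T'.exists_preimage_norm_le T.surjective_rangeRestrict
  refine ⟨C, hC0, fun g hg => ?_⟩
  rw [← Fintype.range_linearCombination] at hg
  obtain ⟨μ, hμ, hμC⟩ := hC ⟨g, hg⟩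
  refine ⟨μ, ?_, hμC⟩
  simpa [T', T, Fintype.linearCombination_apply] using congrArg Subtype.val hμ

theorem sum_smul_mem_convComb_smul {n : ℕ} (φ : Fin n → X) {μ : Fin n → ℝ} {M : ℝ} (hM : 0 < M)
    (hμ : ∑ i, |μ i| ≤ M) :
    ∑ i, μ i • φ i ∈ convComb n (Set.range fun i => M • φ i) := by
  refine ⟨fun i => μ i / M, fun i => M • φ i, ?_, fun i => ⟨i, rfl⟩, ?_⟩
  · simp_rw [abs_div, abs_of_pos hM, ← Finset.sum_div]
    exact (div_le_one hM).2 hμ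
  · simp_rw [smul_smul, div_mul_cancel₀ _ hM.ne']

theorem exists_subset_convComb_smul {n : ℕ} (φ : Fin n → X) {A : Set X}
    (hA : Bornology.IsBounded A) (hAφ : A ⊆ Submodule.span ℝ (Set.range φ)) :
    ∃ M : ℝ, A ⊆ convComb n (Set.range fun i => M • φ i) := by
  obtain ⟨C, hC0, hC⟩ := exists_coeff_norm_le φ
  obtain ⟨R, hR, hAR⟩ := hA.exists_pos_norm_le
  refine ⟨n * (C * R) + 1, fun g hg => ?_⟩
  obtain ⟨μ, rfl, hμ⟩ := hC _ (hAφ hg)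
  refine sum_smul_mem_convComb_smul φ (by positivity) ?_
  calc ∑ i, |μ i| ≤ ∑ _i : Fin n, C * R := by
        refine Finset.sum_le_sum fun i _ => ?_
        calc |μ i| = ‖μ i‖ := (Real.norm_eq_abs _).symm
          _ ≤ ‖μ‖ := norm_le_pi_norm μ i
          _ ≤ C * ‖∑ i, μ i • φ i‖ := hμ
          _ ≤ C * R := by gcongr; exact hAR _ hg
    _ ≤ n * (C * R) + 1 := by simp

theorem cwidth_le_iSup_infEDist_span {n : ℕ} {K : Set X} (hK : Bornology.IsBounded K)
    (φ : Fin n → X) :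
    cwidth n K ≤ ⨆ f ∈ K, infEDist f (Submodule.span ℝ (Set.range φ) : Set X) := by
  refine le_of_forall_gt_imp_ge_of_dense fun D hD => ?_
  rcases eq_or_ne D ⊤ with rfl | hD_top
  · exact le_top
  obtain ⟨M, hM⟩ := exists_subset_convComb_smul φ
    (hK.thickening (δ := D.toReal).subset Set.inter_subset_right) Set.inter_subset_left
  refine (iInf_le _ fun i => M • φ i).trans (iSup₂_le fun f hf => ?_)
  obtain ⟨g, hg, hfg⟩ := infEDist_lt_iff.1 ((le_iSup₂ (f := fun f _ =>
    infEDist f (Submodule.span ℝ (Set.range φ) : Set X)) f hf).trans_lt hD)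
  refine (infEDist_le_edist_of_mem (hM ⟨hg, ?_⟩)).trans hfg.le
  rw [mem_thickening_iff_infEDist_lt, ENNReal.ofReal_toReal hD_top]
  exact (infEDist_le_edist_of_mem hf).trans_lt (edist_comm f g ▸ hfg)

theorem stmt11_general (K : Set X) (n : ℕ) (h : cwidth n K < ⊤) :
    cwidth n K = kwidth n K :=
  le_antisymm (le_iInf (cwidth_le_iSup_infEDist_span (isBounded_of_cwidth_lt_top h)))
    (kwidth_le_cwidth n K)

theorem stmt11 [CompleteSpace X] (K : Set X) (n : ℕ) (h : cwidth n K < ⊤) :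
    cwidth n K = kwidth n K :=
  stmt11_general K n h
end

section
/- Approximation rate for smoothly parameterized networks: if S = {f(·,y) : y ∈ [0,1]^k} with ‖f(·,y) − f(·,y')‖ ≤ ‖y − y'‖ for all y, y', and K = c̄o(S), then c_n(K) ≤ C·n^{−1/k} for all n ≥ 1 (with C an absolute constant depending only on the grid covering, e.g. C = 1 when N(ε,S) ≤ ε^{−k}). -/
/-!
A `1`-Lipschitz image `S` of the cube `[0,1]^k` is `1/(2m)`-covered by the images of the
`m^k` centres of the grid of mesh `1/m`. If `φ_1, …, φ_n` is an `ε`-cover of `S`, replacing every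
atom of a combination in `co_m(S)` by a nearest `φ_j` moves it by at most `ε` and lands in
`co_n({φ_j})`; as the points of `c̄o(S)` are limits of such combinations, `c_n(c̄o(S)) ≤ ε`.
Choosing `m = ⌊n^(1/k)⌋` gives `m^k ≤ n` and `1/(2m) ≤ n^(-1/k)`.
-/

open Metric Set Filter
open scoped ENNReal

variable {X : Type*} [NormedAddCommGroup X] [NormedSpace ℝ X]

lemma convComb_nonempty {S : Set X} (hS : S.Nonempty) (m : ℕ) : (convComb m S).Nonempty := by
  obtain ⟨s, hs⟩ := hS
  exact ⟨0, 0, fun _ => s, by simp, fun _ => hs, by simp⟩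

/-- Terms with the same atom `φ j` merge, and merging only decreases the `ℓ¹` norm. -/
lemma sum_smul_comp_mem_convComb_range {n m : ℕ} (φ : Fin n → X) (g : Fin m → Fin n)
    {l : Fin m → ℝ} (hl : ∑ i, |l i| ≤ 1) :
    ∑ i, l i • φ (g i) ∈ convComb n (range φ) := by
  classical
  refine ⟨fun j => ∑ i with g i = j, l i, φ, ?_, fun j => ⟨j, rfl⟩, ?_⟩
  · calc ∑ j, |∑ i with g i = j, l i| ≤ ∑ j, ∑ i with g i = j, |l i| :=
          Finset.sum_le_sum fun j _ => Finset.abs_sum_le_sum_abs _ _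
      _ = ∑ i, |l i| := Finset.sum_fiberwise _ _ _
      _ ≤ 1 := hl
  · simp_rw [Finset.sum_smul]
    exact (Finset.sum_fiberwise_of_maps_to (fun i _ => Finset.mem_univ (g i)) _).symm.trans
      (Finset.sum_congr rfl fun j _ => Finset.sum_congr rfl fun i hi => by
        rw [(Finset.mem_filter.1 hi).2])

lemma dist_sum_smul_le {ι : Type*} [Fintype ι] (l : ι → ℝ) {s t : ι → X} {ε : ℝ}
    (h : ∀ i, dist (s i) (t i) ≤ ε) :
    dist (∑ i, l i • s i) (∑ i, l i • t i) ≤ (∑ i, |l i|) * ε := by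
  rw [Finset.sum_mul]
  refine dist_sum_sum_le_of_le _ fun i _ => ?_
  rw [dist_smul₀, Real.norm_eq_abs]
  exact mul_le_mul_of_nonneg_left (h i) (abs_nonneg _)

lemma infEDist_convComb_range_le {n m : ℕ} {S : Set X} (φ : Fin n → X) {ε : ℝ} (hε : 0 ≤ ε)
    (hnet : ∀ s ∈ S, ∃ j, dist s (φ j) ≤ ε) {x : X} (hx : x ∈ convComb m S) :
    infEDist x (convComb n (range φ)) ≤ ENNReal.ofReal ε := by
  obtain ⟨l, s, hl, hs, rfl⟩ := hx
  choose g hg using fun i => hnet (s i) (hs i)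
  calc infEDist (∑ i, l i • s i) (convComb n (range φ))
      ≤ edist (∑ i, l i • s i) (∑ i, l i • φ (g i)) :=
        infEDist_le_edist_of_mem (sum_smul_comp_mem_convComb_range φ g hl)
    _ ≤ ENNReal.ofReal ε := by
        rw [edist_dist]
        gcongr
        exact (dist_sum_smul_le l hg).trans (mul_le_of_le_one_left hε hl)

-- Nonemptiness matters: `infDist f ∅ = 0`, so `cobar ∅ = univ`.
lemma cobar_subset_closure {S : Set X} (hS : S.Nonempty) :
    cobar S ⊆ closure (⋃ m, convComb m S) := by
  intro f hf
  refine Metric.mem_closure_iff.2 fun δ hδ => ?_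
  obtain ⟨m, hm⟩ := (hf.eventually (gt_mem_nhds hδ)).exists
  obtain ⟨x, hx, hfx⟩ := (infDist_lt_iff (convComb_nonempty hS m)).1 hm
  exact ⟨x, mem_iUnion.2 ⟨m, hx⟩, hfx⟩

lemma cwidth_cobar_le_of_net {n : ℕ} {S : Set X} (hS : S.Nonempty) (φ : Fin n → X) {ε : ℝ}
    (hε : 0 ≤ ε) (hnet : ∀ s ∈ S, ∃ j, dist s (φ j) ≤ ε) :
    cwidth n (cobar S) ≤ ENNReal.ofReal ε := by
  have hclosed : IsClosed {x : X | infEDist x (convComb n (range φ)) ≤ ENNReal.ofReal ε} :=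
    isClosed_le continuous_infEDist continuous_const
  have hsub : closure (⋃ m, convComb m S) ⊆ _ := closure_minimal
    (iUnion_subset fun m _ hx => infEDist_convComb_range_le φ hε hnet hx) hclosed
  exact (iInf_le _ φ).trans (iSup₂_le fun f hf => hsub (cobar_subset_closure hS hf))

lemma Finset.exists_fin_range_superset {α : Type*} [Nonempty α] (T : Finset α) {n : ℕ}
    (h : T.card ≤ n) : ∃ φ : Fin n → α, ↑T ⊆ Set.range φ := by
  refine ⟨fun j => T.toList.getD j (Classical.arbitrary α), fun t ht => ?_⟩
  obtain ⟨i, hi, rfl⟩ := List.mem_iff_getElem.1 (Finset.mem_toList.2 ht)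
  exact ⟨⟨i, (T.length_toList ▸ hi).trans_le h⟩, by simp [List.getElem?_eq_getElem hi]⟩

/-- Theorem 1, part 2 of the paper, for the set `c̄o(S)` itself. -/
lemma cwidth_cobar_le_of_coverN_le {n : ℕ} {S : Set X} (hS : S.Nonempty) {ε : ℝ}
    (h : coverN ε S ≤ n) : cwidth n (cobar S) ≤ ENNReal.ofReal ε := by
  obtain ⟨T, hT⟩ := iInf_lt_iff.1 ((ENat.lt_add_one_iff (ENat.natCast_ne_top n)).2 h)
  obtain ⟨hnet, hcard⟩ := iInf_lt_iff.1 hT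
  replace hcard : T.card ≤ n := by
    exact_mod_cast (ENat.lt_add_one_iff (ENat.natCast_ne_top n)).1 hcard
  obtain ⟨φ, hφ⟩ := T.exists_fin_range_superset hcard
  have hε : 0 ≤ ε := by
    obtain ⟨s, hs⟩ := hS
    obtain ⟨t, -, hst⟩ := hnet s hs
    exact dist_nonneg.trans hst
  refine cwidth_cobar_le_of_net hS φ hε fun s hs => ?_
  obtain ⟨t, ht, hst⟩ := hnet s hs
  obtain ⟨j, rfl⟩ := hφ ht
  exact ⟨j, hst⟩

lemma coverN_image_le {α E : Type*} [PseudoMetricSpace α] [NormedAddCommGroup E] {F : α → E}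
    {A : Set α} (hF : ∀ y ∈ A, ∀ y' ∈ A, dist (F y) (F y') ≤ dist y y') {T : Finset α}
    (hTA : ↑T ⊆ A) {ε : ℝ} (hnet : ∀ y ∈ A, ∃ t ∈ T, dist y t ≤ ε) :
    coverN ε (F '' A) ≤ T.card := by
  classical
  refine (iInf₂_le (T.image F) ?_).trans (by exact_mod_cast Finset.card_image_le)
  rintro _ ⟨y, hy, rfl⟩
  obtain ⟨t, ht, hyt⟩ := hnet y hy
  exact ⟨F t, Finset.mem_image_of_mem F ht, (hF y hy t (hTA ht)).trans hyt⟩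

lemma exists_fin_abs_sub_le_of_mem_Icc {m : ℕ} (hm : 1 ≤ m) {y : ℝ} (hy : y ∈ Icc (0 : ℝ) 1) :
    ∃ a : Fin m, |y - ((a : ℝ) + 1 / 2) / m| ≤ 1 / (2 * m) := by
  have hm0 : (0 : ℝ) < m := by exact_mod_cast hm
  -- the cell `[a, a + 1] / m` containing `y`, with `y = 1` put in the last cell
  let a : ℕ := min ⌊m * y⌋₊ (m - 1)
  have ha_le : (a : ℝ) ≤ m * y :=
    (Nat.cast_le.2 (min_le_left _ _)).trans (Nat.floor_le (by nlinarith [hy.1]))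
  have hle_a : m * y ≤ (a : ℝ) + 1 := by
    have : (a : ℝ) + 1 = min ((⌊m * y⌋₊ : ℝ) + 1) m := by
      simp only [a, Nat.cast_min, Nat.cast_sub hm, Nat.cast_one]
      rw [← min_add_add_right, sub_add_cancel]
    rw [this]
    exact le_min (Nat.lt_floor_add_one _).le (by nlinarith [hy.2])
  refine ⟨⟨a, (min_le_right _ _).trans_lt (Nat.sub_lt hm one_pos)⟩, ?_⟩
  rw [abs_le]
  constructor <;> field_simp <;> linarith

/-- The `m ^ k` centres of a partition of the unit cube into cubes of side `1 / m`. -/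
noncomputable def cubeGrid (k m : ℕ) : Finset (Fin k → ℝ) :=
  Finset.univ.image fun (v : Fin k → Fin m) i => ((v i : ℝ) + 1 / 2) / m

lemma card_cubeGrid_le (k m : ℕ) : (cubeGrid k m).card ≤ m ^ k :=
  Finset.card_image_le.trans (by simp)

lemma cubeGrid_subset_Icc (k m : ℕ) : ↑(cubeGrid k m) ⊆ Icc (0 : Fin k → ℝ) 1 := by
  intro x hx
  obtain ⟨v, -, rfl⟩ := Finset.mem_image.1 hx
  refine ⟨fun i => by positivity, fun i => ?_⟩
  have hvi : (v i : ℝ) + 1 ≤ m := by exact_mod_cast (v i).isLt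
  exact div_le_one_of_le₀ (by linarith) (Nat.cast_nonneg m)

lemma exists_mem_cubeGrid_dist_le {k m : ℕ} (hm : 1 ≤ m) {y : Fin k → ℝ}
    (hy : y ∈ Icc (0 : Fin k → ℝ) 1) : ∃ t ∈ cubeGrid k m, dist y t ≤ 1 / (2 * m) := by
  choose v hv using fun i => exists_fin_abs_sub_le_of_mem_Icc hm ⟨hy.1 i, hy.2 i⟩
  refine ⟨_, Finset.mem_image_of_mem _ (Finset.mem_univ v), ?_⟩
  exact (dist_pi_le_iff (by positivity)).2 fun i => (Real.dist_eq _ _).trans_le (hv i)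

lemma exists_pow_le_and_one_div_le_rpow (k n : ℕ) (hn : 1 ≤ n) :
    ∃ m : ℕ, 1 ≤ m ∧ m ^ k ≤ n ∧ 1 / (2 * m : ℝ) ≤ (n : ℝ) ^ (-(1 : ℝ) / k) := by
  rcases k.eq_zero_or_pos with rfl | hk
  · exact ⟨1, le_rfl, by simpa using hn, by norm_num⟩
  set x : ℝ := (n : ℝ) ^ ((1 : ℝ) / k)
  have hn0 : (0 : ℝ) ≤ n := Nat.cast_nonneg n
  have hx1 : 1 ≤ x := Real.one_le_rpow (by exact_mod_cast hn) (by positivity)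
  have hxk : x ^ k = n := by
    rw [← Real.rpow_natCast, ← Real.rpow_mul hn0, one_div_mul_cancel (by positivity),
      Real.rpow_one]
  have hm1 : 1 ≤ ⌊x⌋₊ := Nat.le_floor (by exact_mod_cast hx1)
  refine ⟨⌊x⌋₊, hm1, ?_, ?_⟩
  · have : (⌊x⌋₊ : ℝ) ^ k ≤ n :=
      (pow_le_pow_left₀ (Nat.cast_nonneg _) (Nat.floor_le (by positivity)) k).trans hxk.le
    exact_mod_cast this
  · rw [neg_div, Real.rpow_neg hn0, ← one_div]
    have : (1 : ℝ) ≤ ⌊x⌋₊ := by exact_mod_cast hm1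
    exact one_div_le_one_div_of_le (by positivity) (by linarith [Nat.lt_floor_add_one x])

theorem stmt17_general (k : ℕ) (F : (Fin k → ℝ) → X)
    (hF : ∀ y ∈ Set.Icc (0 : Fin k → ℝ) 1, ∀ y' ∈ Set.Icc (0 : Fin k → ℝ) 1,
      ‖F y - F y'‖ ≤ ‖y - y'‖)
    (K : Set X) (hK : K = cobar (F '' Set.Icc (0 : Fin k → ℝ) 1)) :
    ∃ C : ℝ, 0 < C ∧ ∀ n : ℕ, 1 ≤ n →
      cwidth n K ≤ ENNReal.ofReal (C * (n : ℝ) ^ (-(1 : ℝ) / k)) := by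
  refine ⟨1, one_pos, fun n hn => ?_⟩
  obtain ⟨m, hm, hmn, hmε⟩ := exists_pow_le_and_one_div_le_rpow k n hn
  have hS : (F '' Icc (0 : Fin k → ℝ) 1).Nonempty :=
    ⟨F 0, mem_image_of_mem F ⟨le_rfl, zero_le_one⟩⟩
  have hcover : coverN (1 / (2 * m)) (F '' Icc (0 : Fin k → ℝ) 1) ≤ n := by
    refine (coverN_image_le (by simpa only [dist_eq_norm] using hF) (cubeGrid_subset_Icc k m)
      fun y hy => exists_mem_cubeGrid_dist_le hm hy).trans ?_
    exact_mod_cast (card_cubeGrid_le k m).trans hmn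
  rw [hK, one_mul]
  exact (cwidth_cobar_le_of_coverN_le hS hcover).trans (ENNReal.ofReal_le_ofReal hmε)

theorem stmt17 [CompleteSpace X] (k : ℕ) (F : (Fin k → ℝ) → X)
    (hF : ∀ y ∈ Set.Icc (0 : Fin k → ℝ) 1, ∀ y' ∈ Set.Icc (0 : Fin k → ℝ) 1,
      ‖F y - F y'‖ ≤ ‖y - y'‖)
    (K : Set X) (hK : K = cobar (F '' Set.Icc (0 : Fin k → ℝ) 1)) :
    ∃ C : ℝ, 0 < C ∧ ∀ n : ℕ, 1 ≤ n →
      cwidth n K ≤ ENNReal.ofReal (C * (n : ℝ) ^ (-(1 : ℝ) / k)) :=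
  stmt17_general k F hF K hK
end
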